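/- Let f be a bounded affine permutation of type (k,N) and let i ∈ ℤ satisfy i+1 ≤ f(i+1) < f(i) ≤ i+N. Then Imin_{i+1}(f∘s_i) = (Imin_{i+1}(f) ∖ {f(i) mod N}) ∪ {f(i+1) mod N}. -/

import Mathlib

/-! Write `g = f ∘ s_i`. For `j ≤ i` one has `g j = f j` unless `j ≡ i` or
`j ≡ i + 1 (mod N)`. Periodicity gives `f j + N ≤ f a` whenever `j < a` and `j ≡ a (mod N)`;
together with `f (i+1) < f i ≤ i + N` this rules out every `j ≡ i, i + 1` below `i + 1` except
`j = i`, which contributes `g i = f (i+1)`. Injectivity turns `f j ≢ f i (mod N)` into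
`j ≢ i (mod N)`. -/

/-- The affine simple reflection `s_i` of period `N`: `j ↦ j+1` if `j ≡ i (mod N)`,
`j ↦ j−1` if `j ≡ i+1 (mod N)`, and `j ↦ j` otherwise. -/
def sRefl (N : ℕ) (i : ℤ) : ℤ → ℤ := fun j =>
  if (j - i) % (N : ℤ) = 0 then j + 1
  else if (j - (i + 1)) % (N : ℤ) = 0 then j - 1
  else j

/-- `Imin_i(f) = { f j mod N : j < i and f j ≥ i } ⊆ ℤ/Nℤ`. -/
def Imin (N : ℕ) (f : ℤ → ℤ) (i : ℤ) : Set (ZMod N) :=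
  {x | ∃ j : ℤ, j < i ∧ i ≤ f j ∧ x = ((f j : ℤ) : ZMod N)}

section Reflection

variable {N : ℕ} {i j : ℤ}

lemma sRefl_of_dvd (h : (N : ℤ) ∣ j - i) : sRefl N i j = j + 1 := by
  simp [sRefl, Int.emod_eq_zero_of_dvd h]

lemma sRefl_of_dvd_sub_succ (h : ¬(N : ℤ) ∣ j - i) (h' : (N : ℤ) ∣ j - (i + 1)) :
    sRefl N i j = j - 1 := by
  simp [sRefl, Int.dvd_iff_emod_eq_zero.not.mp h, Int.emod_eq_zero_of_dvd h']

lemma sRefl_of_not_dvd (h : ¬(N : ℤ) ∣ j - i) (h' : ¬(N : ℤ) ∣ j - (i + 1)) :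
    sRefl N i j = j := by
  simp [sRefl, Int.dvd_iff_emod_eq_zero.not.mp h, Int.dvd_iff_emod_eq_zero.not.mp h']

end Reflection

section Periodic

variable {N : ℕ} {f : ℤ → ℤ} {i : ℤ}

lemma map_add_mul (hper : ∀ j : ℤ, f (j + (N : ℤ)) = f j + (N : ℤ)) (j m : ℤ) :
    f (j + m * N) = f j + m * N := by
  induction m using Int.induction_on with
  | zero => simp
  | succ m ih =>
    rw [show j + (m + 1 : ℤ) * N = j + m * N + N by ring, hper, ih]
    ring
  | pred m ih =>
    have := hper (j + (-m - 1 : ℤ) * N)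
    rw [show j + (-m - 1 : ℤ) * N + N = j + -m * N by ring, ih] at this
    linarith

lemma add_le_of_dvd_sub_of_lt (hper : ∀ j : ℤ, f (j + (N : ℤ)) = f j + (N : ℤ)) {a j : ℤ}
    (hd : (N : ℤ) ∣ j - a) (hj : j < a) : f j + N ≤ f a := by
  obtain ⟨m, hm⟩ := dvd_sub_comm.mp hd
  have hm_pos : 0 < m := pos_of_mul_pos_right (hm ▸ sub_pos.mpr hj) (Int.natCast_nonneg N)
  have ha : f a = f j + m * N := by rw [← map_add_mul hper, show a = j + m * N by linarith]
  nlinarith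

lemma intCast_map_eq_iff (hper : ∀ j : ℤ, f (j + (N : ℤ)) = f j + (N : ℤ))
    (hinj : Function.Injective f) {a b : ℤ} :
    ((f a : ℤ) : ZMod N) = f b ↔ (N : ℤ) ∣ b - a := by
  rw [ZMod.intCast_eq_intCast_iff_dvd_sub]
  constructor
  · rintro ⟨m, hm⟩
    have : f b = f (a + m * N) := by rw [map_add_mul hper]; linarith
    exact ⟨m, by rw [hinj this]; ring⟩
  · rintro ⟨m, hm⟩
    exact ⟨m, by rw [show b = a + m * N by linarith, map_add_mul hper]; ring⟩

lemma Imin_comp_sRefl_subset (hper : ∀ j : ℤ, f (j + (N : ℤ)) = f j + (N : ℤ))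
    (hinj : Function.Injective f) (h2 : f (i + 1) < f i) (h3 : f i ≤ i + (N : ℤ)) :
    Imin N (f ∘ sRefl N i) (i + 1) ⊆
      (Imin N f (i + 1) \ {((f i : ℤ) : ZMod N)}) ∪ {((f (i + 1) : ℤ) : ZMod N)} := by
  rintro _ ⟨j, hj, hgj, rfl⟩
  by_cases hji : (N : ℤ) ∣ j - i
  · rw [Function.comp_apply, sRefl_of_dvd hji] at hgj ⊢
    obtain rfl | hlt := (Int.lt_add_one_iff.mp hj).eq_or_lt
    · exact Or.inr rfl
    · have := add_le_of_dvd_sub_of_lt hper (a := i + 1) (by rwa [add_sub_add_right_eq_sub])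
        (by omega)
      omega
  by_cases hji' : (N : ℤ) ∣ j - (i + 1)
  · rw [Function.comp_apply, sRefl_of_dvd_sub_succ hji hji'] at hgj
    have := add_le_of_dvd_sub_of_lt hper (j := j - 1) (a := i) (by convert hji' using 1; ring)
      (by omega)
    omega
  rw [Function.comp_apply, sRefl_of_not_dvd hji hji'] at hgj ⊢
  refine Or.inl ⟨⟨j, hj, hgj, rfl⟩, fun h ↦ hji ?_⟩
  exact dvd_sub_comm.mp ((intCast_map_eq_iff hper hinj).mp h)

lemma subset_Imin_comp_sRefl (hper : ∀ j : ℤ, f (j + (N : ℤ)) = f j + (N : ℤ))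
    (hinj : Function.Injective f) (h1 : i + 1 ≤ f (i + 1)) (h2 : f (i + 1) < f i)
    (h3 : f i ≤ i + (N : ℤ)) :
    (Imin N f (i + 1) \ {((f i : ℤ) : ZMod N)}) ∪ {((f (i + 1) : ℤ) : ZMod N)} ⊆
      Imin N (f ∘ sRefl N i) (i + 1) := by
  rintro _ (⟨⟨j, hj, hfj, rfl⟩, hne⟩ | rfl)
  · have hji : ¬(N : ℤ) ∣ j - i := fun h ↦
      hne ((intCast_map_eq_iff hper hinj).mpr (dvd_sub_comm.mp h))
    have hji' : ¬(N : ℤ) ∣ j - (i + 1) := fun h ↦ by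
      have := add_le_of_dvd_sub_of_lt hper h hj
      omega
    exact ⟨j, hj, by simpa [sRefl_of_not_dvd hji hji'] using hfj,
      by simp [sRefl_of_not_dvd hji hji']⟩
  · have hs : sRefl N i i = i + 1 := sRefl_of_dvd (by simp)
    exact ⟨i, by omega, by simpa [hs] using h1, by simp [hs]⟩

end Periodic

theorem stmt17_general (N : ℕ) (f : ℤ → ℤ)
    (hbij : Function.Bijective f)
    (hper : ∀ j : ℤ, f (j + (N : ℤ)) = f j + (N : ℤ))
    (i : ℤ)
    (h1 : i + 1 ≤ f (i + 1)) (h2 : f (i + 1) < f i) (h3 : f i ≤ i + (N : ℤ)) :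
    Imin N (f ∘ sRefl N i) (i + 1) =
      (Imin N f (i + 1) \ {((f i : ℤ) : ZMod N)}) ∪ {((f (i + 1) : ℤ) : ZMod N)} :=
  (Imin_comp_sRefl_subset hper hbij.injective h2 h3).antisymm
    (subset_Imin_comp_sRefl hper hbij.injective h1 h2 h3)

/-- For a bounded affine permutation `f` of type `(k,N)` with
`i+1 ≤ f(i+1) < f(i) ≤ i+N`, one has
`Imin_{i+1}(f∘s_i) = (Imin_{i+1}(f) ∖ {f i mod N}) ∪ {f (i+1) mod N}`. -/
theorem stmt17 (k N : ℕ) (hN : 1 ≤ N) (hkN : k ≤ N) (f : ℤ → ℤ)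
    (hbij : Function.Bijective f)
    (hper : ∀ j : ℤ, f (j + (N : ℤ)) = f j + (N : ℤ))
    (hbound : ∀ j : ℤ, j ≤ f j ∧ f j ≤ j + (N : ℤ))
    (hsum : ∑ j ∈ Finset.Icc (1 : ℤ) (N : ℤ), (f j - j) = (k : ℤ) * (N : ℤ))
    (i : ℤ)
    (h1 : i + 1 ≤ f (i + 1)) (h2 : f (i + 1) < f i) (h3 : f i ≤ i + (N : ℤ)) :
    Imin N (f ∘ sRefl N i) (i + 1) =
      (Imin N f (i + 1) \ {((f i : ℤ) : ZMod N)}) ∪ {((f (i + 1) : ℤ) : ZMod N)} :=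
  stmt17_general N f hbij hper i h1 h2 h3
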